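/- arXiv:2105.04975 — 5 statements merged into one kernel-verified Lean document; each statement's English description precedes it below -/
import Mathlib

section
/- There exists a constant c > 0 such that for every integer n > 0 and every integer p with 1 ≤ p ≤ n+1, the number b_{n,p} of quadrangulations with simple boundary of length 2p and n inner faces satisfies b_{n,p} ≤ c · C_p · n^{-5/2} · 12^n, where C_p = 2^p·3^{-p}·(3p)!/(p!·(2p-1)!)·1/(2√π). -/
open Nat

/-- `b_{n,p} = 3^{n-p}·(3p)!·(2n+p-1)!/((n+1-p)!·p!·(2p-1)!·(n+2p)!)`. -/
noncomputable def bnp (n p : ℕ) : ℝ :=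
  (3 : ℝ) ^ ((n : ℤ) - p) * (3 * p)! * (2 * n + p - 1)! /
    ((n + 1 - p)! * (p)! * (2 * p - 1)! * (n + 2 * p)!)

/-- `C_p = 2^p·3^{-p}·(3p)!/(p!·(2p-1)!) · 1/(2√π)`. -/
noncomputable def Cp (p : ℕ) : ℝ :=
  (2 : ℝ) ^ p * (3 : ℝ) ^ (-(p : ℤ)) * (3 * p)! / ((p)! * (2 * p - 1)!)
    * (1 / (2 * Real.sqrt Real.pi))

lemma aux1 : ∀ n : ℕ, (2*n+1) * centralBinom n ^ 2 ≤ 16 ^ n := by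
  intro n
  induction n with
  | zero => simp [centralBinom]
  | succ n ih =>
    have h := Nat.succ_mul_centralBinom_succ n
    have hle : (2*n+1)*(2*n+3) ≤ 4*(n+1)^2 := by nlinarith
    have key : (n+1)^2 * ((2*(n+1)+1) * centralBinom (n+1) ^ 2)
        ≤ (n+1)^2 * 16 ^ (n+1) := by
      have e : (n+1)^2 * ((2*(n+1)+1) * centralBinom (n+1) ^ 2)
          = (2*n+3) * ((n+1) * centralBinom (n+1))^2 := by ring
      rw [e, h]
      calc (2*n+3) * (2 * (2*n+1) * centralBinom n)^2
          = ((2*n+1)*(2*n+3)) * (4 * ((2*n+1) * centralBinom n ^2)) := by ring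
        _ ≤ (4*(n+1)^2) * (4 * 16 ^ n) :=
            Nat.mul_le_mul hle (Nat.mul_le_mul_left _ ih)
        _ = (n+1)^2 * 16 ^ (n+1) := by ring
    exact Nat.le_of_mul_le_mul_left key (by positivity)

lemma aux2 (m k : ℕ) : (m+1) * (m.choose k)^2 ≤ 4 * 4^m := by
  rcases Nat.even_or_odd m with ⟨t, ht⟩ | ⟨t, ht⟩
  · subst ht
    have h1 : (t+t).choose k ≤ centralBinom t := by
      have := Nat.choose_le_centralBinom k t
      simpa [two_mul] using this
    calc (t+t+1) * ((t+t).choose k)^2 ≤ (2*t+1) * centralBinom t ^2 := by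
          rw [two_mul]; exact Nat.mul_le_mul_left _ (Nat.pow_le_pow_left h1 2)
      _ ≤ 16 ^ t := aux1 t
      _ ≤ 4 * 4 ^ (t+t) := by
          rw [pow_add]
          have : (16:ℕ)^t = 4^t*4^t := by rw [← Nat.mul_pow]
          omega
  · subst ht
    have h1 : (2*t+1).choose k ≤ centralBinom (t+1) := by
      calc (2*t+1).choose k ≤ (2*(t+1)).choose k :=
            Nat.choose_le_choose k (by omega)
        _ ≤ centralBinom (t+1) := Nat.choose_le_centralBinom k (t+1)
    calc (2*t+1+1) * ((2*t+1).choose k)^2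
        ≤ (2*(t+1)+1) * centralBinom (t+1) ^2 :=
          Nat.mul_le_mul (by omega) (Nat.pow_le_pow_left h1 2)
      _ ≤ 16 ^ (t+1) := aux1 (t+1)
      _ = 4 * 4 ^ (2*t+1) := by rw [show (16:ℕ) = 4*4 by norm_num, mul_pow]; ring

lemma aux3 (m k : ℕ) : (m.choose k : ℝ) * Real.sqrt (m+1) ≤ 2^(m+1) := by
  have h : ((m:ℝ)+1) * (m.choose k : ℝ)^2 ≤ 4 * 4^m := by exact_mod_cast aux2 m k
  have hsq : ((m.choose k : ℝ) * Real.sqrt (m+1))^2 ≤ ((2:ℝ)^(m+1))^2 := by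
    have h1 : (Real.sqrt ((m:ℝ)+1))^2 = (m:ℝ)+1 := Real.sq_sqrt (by positivity)
    have h2 : ((2:ℝ)^(m+1))^2 = 4 * 4^m := by
      rw [← pow_mul, mul_comm, pow_mul]
      norm_num [pow_succ]
      ring
    rw [mul_pow, h1, h2]
    nlinarith
  exact (pow_le_pow_iff_left₀ (by positivity) (by positivity) two_ne_zero).mp hsq


/-- There is a constant `c > 0` such that for all `n > 0` and `1 ≤ p ≤ n+1`,
`b_{n,p} ≤ c · C_p · n^{-5/2} · 12^n`, uniformly in `p`. -/
theorem stmt_3 :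
    ∃ c : ℝ, 0 < c ∧ ∀ n p : ℕ, 0 < n → 1 ≤ p → p ≤ n + 1 →
      bnp n p ≤ c * Cp p * (n : ℝ) ^ (-(5 : ℝ) / 2) * 12 ^ n := by
  refine ⟨2 * Real.sqrt Real.pi, by positivity, ?_⟩
  intro n p hn hp1 hp2
  have hπ : (0:ℝ) < Real.sqrt Real.pi := Real.sqrt_pos.mpr Real.pi_pos
  -- nonzeroness of factorials
  have hB : ((p)! : ℝ) ≠ 0 := by positivity
  have hD : (((2*p-1))! : ℝ) ≠ 0 := by positivity
  have hF : (((n+1-p))! : ℝ) ≠ 0 := by positivity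
  have hG : (((n+2*p))! : ℝ) ≠ 0 := by positivity
  -- Step A: identity
  have hA : bnp n p = Cp p * (2*Real.sqrt Real.pi) * 3^n * ((2*n+p-1)! : ℝ) /
      ((2:ℝ)^p * ((n+1-p)! : ℝ) * ((n+2*p)! : ℝ)) := by
    unfold bnp Cp
    rw [zpow_sub₀ (by norm_num : (3:ℝ) ≠ 0), zpow_neg, zpow_natCast, zpow_natCast]
    field_simp
  -- key fraction bound
  set w : ℕ := n + 2*p - 2 with hw
  have hwid : n + 2*p = w + 2 := by omega
  have hk : n + 1 - p ≤ 2*n + p - 1 := by omega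
  have hmk : (2*n+p-1) - (n+1-p) = w := by omega
  have hchoose := Nat.choose_mul_factorial_mul_factorial hk
  rw [hmk] at hchoose
  have hE : ((2*n+p-1)! : ℝ)
      = ((2*n+p-1).choose (n+1-p) : ℝ) * ((n+1-p)! : ℝ) * ((w)! : ℝ) := by
    exact_mod_cast hchoose.symm
  have hGe : ((n+2*p)! : ℝ) = ((w:ℝ)+2) * ((w:ℝ)+1) * ((w)! : ℝ) := by
    rw [hwid]
    push_cast [Nat.factorial_succ]
    ring
  -- choose bound
  have hm1 : (2*n+p-1) + 1 = 2*n+p := by omega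
  have hC : ((2*n+p-1).choose (n+1-p) : ℝ) * Real.sqrt ((2*n:ℝ)+p)
      ≤ 4^n * 2^p := by
    have := aux3 (2*n+p-1) (n+1-p)
    rw [hm1] at this
    have e2 : ((2:ℝ))^(2*n+p) = 4^n * 2^p := by
      rw [pow_add, pow_mul]; norm_num
    have e3 : (((2*n+p-1:ℕ):ℝ)+1) = (2*n:ℝ)+p := by
      push_cast [Nat.cast_sub (by omega : 1 ≤ 2*n+p)]
      ring
    rw [e3] at this
    rw [← e2]
    exact this
  -- rpow
  have hr : (n:ℝ) ^ (-(5:ℝ)/2) = ((n:ℝ)^2 * Real.sqrt n)⁻¹ := by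
    have hn0 : (0:ℝ) < (n:ℝ) := by exact_mod_cast hn
    rw [show (-(5:ℝ)/2) = -(2 + 1/2) by norm_num, Real.rpow_neg hn0.le,
      Real.rpow_add hn0, Real.sqrt_eq_rpow]
    have h2 : (n:ℝ)^((2:ℝ)) = (n:ℝ)^(2:ℕ) := by
      rw [← Real.rpow_natCast]; norm_num
    rw [h2]
  -- main inequality on the fraction
  have hfrac : ((2*n+p-1)! : ℝ) / ((2:ℝ)^p * ((n+1-p)! : ℝ) * ((n+2*p)! : ℝ))
      ≤ (n:ℝ) ^ (-(5:ℝ)/2) * 4^n := by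
    rw [div_le_iff₀ (by positivity)]
    rw [hE, hGe, hr]
    have hs2 : Real.sqrt (n:ℝ) ≤ Real.sqrt ((2*n:ℝ)+p) := by
      apply Real.sqrt_le_sqrt
      have h0n : (0:ℝ) ≤ (n:ℝ) := by positivity
      have h0p : (0:ℝ) ≤ (p:ℝ) := by positivity
      linarith
    have hwn1 : (n:ℝ) ≤ (w:ℝ)+1 := by
      have : n ≤ w + 1 := by omega
      exact_mod_cast this
    have hwn2 : (n:ℝ) ≤ (w:ℝ)+2 := by
      have : n ≤ w + 2 := by omega
      exact_mod_cast this
    have hn0 : (0:ℝ) < (n:ℝ) := by exact_mod_cast hn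
    have hsn : (0:ℝ) < Real.sqrt n := Real.sqrt_pos.mpr hn0
    have hC' : ((2*n+p-1).choose (n+1-p) : ℝ) * ((n:ℝ)^2 * Real.sqrt n)
        ≤ 4^n * 2^p * (((w:ℝ)+2) * ((w:ℝ)+1)) := by
      calc ((2*n+p-1).choose (n+1-p) : ℝ) * ((n:ℝ)^2 * Real.sqrt n)
          ≤ ((2*n+p-1).choose (n+1-p) : ℝ) * (Real.sqrt ((2*n:ℝ)+p) * (((w:ℝ)+2) * ((w:ℝ)+1))) := by
            apply mul_le_mul_of_nonneg_left _ (by positivity)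
            calc (n:ℝ)^2 * Real.sqrt n = Real.sqrt n * ((n:ℝ) * (n:ℝ)) := by ring
              _ ≤ Real.sqrt ((2*n:ℝ)+p) * (((w:ℝ)+2) * ((w:ℝ)+1)) := by
                  apply mul_le_mul hs2 _ (by positivity) (by positivity)
                  exact mul_le_mul hwn2 hwn1 hn0.le (by linarith)
        _ = (((2*n+p-1).choose (n+1-p) : ℝ) * Real.sqrt ((2*n:ℝ)+p)) * (((w:ℝ)+2) * ((w:ℝ)+1)) := by
            ring
        _ ≤ (4^n * 2^p) * (((w:ℝ)+2) * ((w:ℝ)+1)) := by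
            apply mul_le_mul_of_nonneg_right hC (by positivity)
    have hW : (0:ℝ) < ((w)! : ℝ) := by positivity
    have hF' : (0:ℝ) < ((n+1-p)! : ℝ) := by positivity
    rw [mul_comm ((((n:ℝ))^2 * Real.sqrt n)⁻¹) ((4:ℝ)^n), ← div_eq_mul_inv,
      div_mul_eq_mul_div, le_div_iff₀ (by positivity)]
    calc ((2*n+p-1).choose (n+1-p) : ℝ) * ((n+1-p)! : ℝ) * ((w)! : ℝ) * ((n:ℝ)^2 * Real.sqrt n)
        = (((2*n+p-1).choose (n+1-p) : ℝ) * ((n:ℝ)^2 * Real.sqrt n)) * (((n+1-p)! : ℝ) * ((w)! : ℝ)) := by ring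
      _ ≤ (4^n * 2^p * (((w:ℝ)+2) * ((w:ℝ)+1))) * (((n+1-p)! : ℝ) * ((w)! : ℝ)) := by
          apply mul_le_mul_of_nonneg_right hC' (by positivity)
      _ = 4^n * ((2:ℝ)^p * ((n+1-p)! : ℝ) * (((w:ℝ)+2) * ((w:ℝ)+1) * ((w)! : ℝ))) := by ring
  -- assemble
  rw [hA]
  have hCp : (0:ℝ) ≤ Cp p := by
    unfold Cp; positivity
  calc Cp p * (2*Real.sqrt Real.pi) * 3^n * ((2*n+p-1)! : ℝ) /
        ((2:ℝ)^p * ((n+1-p)! : ℝ) * ((n+2*p)! : ℝ))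
      = (Cp p * (2*Real.sqrt Real.pi) * 3^n) *
        (((2*n+p-1)! : ℝ) / ((2:ℝ)^p * ((n+1-p)! : ℝ) * ((n+2*p)! : ℝ))) := by
        rw [mul_div_assoc]
    _ ≤ (Cp p * (2*Real.sqrt Real.pi) * 3^n) * ((n:ℝ) ^ (-(5:ℝ)/2) * 4^n) := by
        apply mul_le_mul_of_nonneg_left hfrac (by positivity)
    _ = 2 * Real.sqrt Real.pi * Cp p * (n:ℝ) ^ (-(5:ℝ)/2) * 12 ^ n := by
        rw [show ((12:ℝ))^n = 3^n * 4^n by rw [← mul_pow]; norm_num]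
        ring
end

section
/- For every integer n > 0 and every real x ∈ [0, 1), define f_n(x) = (2 + x + 3/(2n))·ln(1 + x/2 + 1/n) − (1 − x + 1/(2n))·ln(1 − x) − (1 + 2x + 5/(2n))·ln(1 + 2x + 2/n). Then for every integer p with 1 ≤ p ≤ n, f_n((p−1)/n) ≤ 0. -/
open Real Set

lemma convexOn_aux (c : ℝ) (hc : 0 < c) :
    ConvexOn ℝ (Set.Ici c) (fun u : ℝ => (u + c) * Real.log u) := by
  have hint : interior (Set.Ici c) = Set.Ioi c := interior_Ici
  apply convexOn_of_hasDerivWithinAt2_nonneg (convex_Ici c)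
    (f' := fun u => Real.log u + 1 + c / u) (f'' := fun u => 1 / u - c / u ^ 2)
  · apply ContinuousOn.mul (by fun_prop)
    intro u hu
    exact (Real.continuousAt_log (lt_of_lt_of_le hc hu).ne').continuousWithinAt
  · intro x hx
    rw [hint] at hx ⊢
    have hx0 : (0:ℝ) < x := lt_of_le_of_lt hc.le hx
    have h : HasDerivAt (fun u : ℝ => (u + c) * Real.log u)
        (1 * Real.log x + (x + c) * x⁻¹) x :=
      ((hasDerivAt_id x).add_const c).mul (Real.hasDerivAt_log hx0.ne')
    have : 1 * Real.log x + (x + c) * x⁻¹ = Real.log x + 1 + c / x := by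
      field_simp; ring
    rw [this] at h
    exact h.hasDerivWithinAt
  · intro x hx
    rw [hint] at hx ⊢
    have hx0 : (0:ℝ) < x := lt_of_le_of_lt hc.le hx
    have h : HasDerivAt (fun u : ℝ => Real.log u + 1 + c / u)
        (1 / x + (-(c / x ^ 2))) x := by
      have h1 : HasDerivAt (fun u : ℝ => Real.log u + 1) (1 / x) x := by
        simpa using (Real.hasDerivAt_log hx0.ne').add_const 1
      have h2 : HasDerivAt (fun u : ℝ => c / u) (-(c / x ^ 2)) x := by
        have := (hasDerivAt_inv hx0.ne').const_mul c
        have e : c * -(x ^ 2)⁻¹ = -(c / x ^ 2) := by field_simp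
        rw [e] at this
        simpa [div_eq_mul_inv] using this
      exact h1.add h2
    have : 1 / x + (-(c / x ^ 2)) = 1 / x - c / x ^ 2 := by ring
    rw [this] at h
    exact h.hasDerivWithinAt
  · intro x hx
    rw [hint] at hx
    have hx0 : (0:ℝ) < x := lt_of_le_of_lt hc.le hx
    rw [sub_nonneg, div_le_div_iff₀ (by positivity) hx0]
    nlinarith [mul_lt_mul_of_pos_right hx hx0]

/-- For `n > 0` and `x ∈ [0,1)`, the Stirling-comparison function
`f_n(x) = (2+x+3/(2n))·ln(1+x/2+1/n) − (1−x+1/(2n))·ln(1−x) − (1+2x+5/(2n))·ln(1+2x+2/n)`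
satisfies `f_n((p−1)/n) ≤ 0` for every `1 ≤ p ≤ n`. -/
theorem stmt_4 (n : ℕ) (hn : 0 < n) (p : ℕ) (hp1 : 1 ≤ p) (hpn : p ≤ n) :
    (fun x : ℝ =>
        (2 + x + 3 / (2 * n)) * Real.log (1 + x / 2 + 1 / n)
          - (1 - x + 1 / (2 * n)) * Real.log (1 - x)
          - (1 + 2 * x + 5 / (2 * n)) * Real.log (1 + 2 * x + 2 / n))
      (((p : ℝ) - 1) / n) ≤ 0 := by
  have hn' : (0:ℝ) < n := by exact_mod_cast hn
  set x : ℝ := ((p : ℝ) - 1) / n with hxdef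
  set c : ℝ := 1 / (2 * n) with hcdef
  have hc : 0 < c := by positivity
  set a : ℝ := 1 - x with hadef
  set b : ℝ := 1 + 2 * x + 2 / n with hbdef
  have hp1' : (1:ℝ) ≤ (p:ℝ) := by exact_mod_cast hp1
  have hpn' : (p:ℝ) ≤ (n:ℝ) := by exact_mod_cast hpn
  have hx0 : 0 ≤ x := by apply div_nonneg (by linarith) hn'.le
  have ha : c ≤ a := by
    have : x ≤ 1 - 1/n := by
      rw [hxdef, div_le_iff₀ hn']
      have : (1 - 1/(n:ℝ)) * n = n - 1 := by field_simp
      rw [this]; linarith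
    have h2 : c ≤ 1/n := by rw [hcdef]; rw [div_le_div_iff₀ (by positivity) hn']; nlinarith
    rw [hadef]; linarith
  have hb : c ≤ b := by
    have : c ≤ 1 := by rw [hcdef, div_le_one (by positivity)]; nlinarith [hn']
    rw [hbdef]
    have : 0 ≤ 2/(n:ℝ) := by positivity
    linarith
  have hconv := (convexOn_aux c hc).2 (Set.mem_Ici.mpr ha) (Set.mem_Ici.mpr hb)
    (by norm_num : (0:ℝ) ≤ (1:ℝ)/2) (by norm_num : (0:ℝ) ≤ (1:ℝ)/2) (by norm_num)
  simp only [smul_eq_mul] at hconv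
  have hmid : (1:ℝ)/2 * a + 1/2 * b = 1 + x / 2 + 1 / n := by
    rw [hadef, hbdef]; ring
  rw [hmid] at hconv
  -- hconv : (m + c) * log m ≤ 1/2 * ((a+c)*log a) + 1/2 * ((b+c)*log b)
  set m : ℝ := 1 + x / 2 + 1 / n with hmdef
  have hm1 : 1 ≤ m := by
    have h : 0 < 1/(n:ℝ) := by positivity
    rw [hmdef]; linarith
  have hlogm : 0 ≤ Real.log m := Real.log_nonneg hm1
  simp only
  have e1 : (2 + x + 3 / (2 * (n:ℝ))) = 2 * (m + c) - 3 * c := by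
    rw [hmdef, hcdef]; ring
  have e2 : (1 - x + 1 / (2 * (n:ℝ))) = a + c := by rw [hadef, hcdef]
  have e3 : (1 + 2 * x + 5 / (2 * (n:ℝ))) = b + c := by
    rw [hbdef, hcdef]; field_simp; ring
  rw [e1, e2, e3]
  nlinarith [hconv, hlogm, hc]
end

section
/- Fix p ∈ (0, 1). Define g(t) = ((2p+1)·t + (1−p) + √(3p(p+2)·t² + 2(1−p)(p+2)·t + (1−p)²)) / (1−p) for t > 0. Let y = arccosh((2p+1)/(1−p)). If t > 0 satisfies t = ((1−p)/(3p))·(−1 + √(2(1−p)/(p+2))·cosh(β)) for some β ≥ y, then g(t) = ((1−p)/(3p))·(−1 + √(2(1−p)/(p+2))·cosh(β + y)). -/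
/-- The inverse hyperbolic cosine on `[1, ∞)`. -/
noncomputable def arcosh (x : ℝ) : ℝ := Real.log (x + Real.sqrt (x ^ 2 - 1))

lemma arcosh_aux {x : ℝ} (hx : 1 ≤ x) :
    Real.cosh (arcosh x) = x ∧ Real.sinh (arcosh x) = Real.sqrt (x ^ 2 - 1) ∧
      0 ≤ arcosh x := by
  have h0 : (0:ℝ) ≤ x ^ 2 - 1 := by nlinarith
  have hs := Real.sq_sqrt h0
  have hsn := Real.sqrt_nonneg (x ^ 2 - 1)
  have hu : 0 < x + Real.sqrt (x ^ 2 - 1) := by linarith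
  have hinv : (x + Real.sqrt (x ^ 2 - 1))⁻¹ = x - Real.sqrt (x ^ 2 - 1) := by
    refine inv_eq_of_mul_eq_one_right ?_
    nlinarith [hs]
  refine ⟨?_, ?_, ?_⟩
  · rw [arcosh, Real.cosh_log hu, hinv]; ring
  · rw [arcosh, Real.sinh_log hu, hinv]; ring
  · exact Real.log_nonneg (by linarith)

/-- Induction step for the closed hyperbolic form of `T_r`: with
`g(t) = ((2p+1)t + (1−p) + √(3p(p+2)t² + 2(1−p)(p+2)t + (1−p)²))/(1−p)` and
`y = arccosh((2p+1)/(1−p))`, if `t > 0` has the form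
`((1−p)/(3p))·(−1 + √(2(1−p)/(p+2))·cosh β)` with `β ≥ y`, then
`g(t) = ((1−p)/(3p))·(−1 + √(2(1−p)/(p+2))·cosh(β + y))`. -/
theorem stmt_7 (p : ℝ) (hp0 : 0 < p) (hp1 : p < 1) (t β : ℝ) (ht : 0 < t)
    (hβ : arcosh ((2 * p + 1) / (1 - p)) ≤ β)
    (hform : t = ((1 - p) / (3 * p)) *
      (-1 + Real.sqrt (2 * (1 - p) / (p + 2)) * Real.cosh β)) :
    ((2 * p + 1) * t + (1 - p) +
        Real.sqrt (3 * p * (p + 2) * t ^ 2 + 2 * (1 - p) * (p + 2) * t + (1 - p) ^ 2))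
      / (1 - p) =
    ((1 - p) / (3 * p)) *
      (-1 + Real.sqrt (2 * (1 - p) / (p + 2)) *
        Real.cosh (β + arcosh ((2 * p + 1) / (1 - p)))) := by
  have h1p : (0:ℝ) < 1 - p := by linarith
  have hp2 : (0:ℝ) < p + 2 := by linarith
  set x : ℝ := (2 * p + 1) / (1 - p) with hxdef
  have hx1 : (1:ℝ) ≤ x := by rw [hxdef, le_div_iff₀ h1p]; nlinarith
  obtain ⟨hc, hsh, hy0⟩ := arcosh_aux hx1
  have hx2 : x ^ 2 - 1 = 3 * p * (p + 2) / (1 - p) ^ 2 := by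
    rw [hxdef]; field_simp; ring
  set c : ℝ := Real.sqrt (2 * (1 - p) / (p + 2)) with hcdef
  set s3 : ℝ := Real.sqrt (3 * p * (p + 2)) with hs3def
  have hcnn : 0 ≤ c := Real.sqrt_nonneg _
  have hs3nn : 0 ≤ s3 := Real.sqrt_nonneg _
  have hshv : Real.sinh (arcosh x) = s3 / (1 - p) := by
    rw [hsh, hx2, hs3def, Real.sqrt_div (by positivity), Real.sqrt_sq h1p.le]
  have hsb : 0 ≤ Real.sinh β := Real.sinh_nonneg_iff.mpr (le_trans hy0 hβ)
  have hc2 : (p + 2) * c ^ 2 = 2 * (1 - p) := by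
    rw [hcdef, Real.sq_sqrt (by positivity)]; field_simp
  have hs3sq : s3 ^ 2 = 3 * p * (p + 2) := Real.sq_sqrt (by positivity)
  have hs2 : Real.sinh β ^ 2 = Real.cosh β ^ 2 - 1 := by
    have := Real.cosh_sq β; linarith
  have hD : 3 * p * t = (1 - p) * (-1 + c * Real.cosh β) := by
    rw [hform]; field_simp
  have hQ9 : 9 * p ^ 2 * (3 * p * (p + 2) * t ^ 2 + 2 * (1 - p) * (p + 2) * t + (1 - p) ^ 2)
      = (1 - p) ^ 2 * (c * s3 * Real.sinh β) ^ 2 := by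
    linear_combination
      (3 * p * (p + 2) * (3 * p * t + (1 - p) * (-1 + c * Real.cosh β))
        + 6 * p * (1 - p) * (p + 2)) * hD
      + 3 * p * (1 - p) ^ 2 * hc2
      - (1 - p) ^ 2 * c ^ 2 * Real.sinh β ^ 2 * hs3sq
      - 3 * p * (p + 2) * (1 - p) ^ 2 * c ^ 2 * hs2
  have hQ : 3 * p * (p + 2) * t ^ 2 + 2 * (1 - p) * (p + 2) * t + (1 - p) ^ 2
      = (((1 - p) / (3 * p)) * (c * s3) * Real.sinh β) ^ 2 := by
    have h9 : (9:ℝ) * p ^ 2 ≠ 0 := by positivity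
    apply mul_left_cancel₀ h9
    rw [hQ9]; field_simp; ring
  have hQs : Real.sqrt (3 * p * (p + 2) * t ^ 2 + 2 * (1 - p) * (p + 2) * t + (1 - p) ^ 2)
      = ((1 - p) / (3 * p)) * (c * s3) * Real.sinh β := by
    rw [hQ, Real.sqrt_sq (by positivity)]
  rw [hQs, Real.cosh_add, hc, hshv, hform, hxdef]
  field_simp
  ring
end

section
/- Fix p ∈ (0, 1) and u ∈ [0, 1). Let y = arccosh((2p+1)/(1−p)) and B(u) = arccosh(√((p+2)/(2(1−p)))·(1 + 6p/((1−u)(1−p)))). Define T_0(u) = 2/(1−u) and T_{r+1}(u) = g(T_r(u)) where g(t) = ((2p+1)·t + (1−p) + √(3p(p+2)·t² + 2(1−p)(p+2)·t + (1−p)²))/(1−p). Then for every integer r ≥ 0, T_r(u) = ((1−p)/(3p))·(−1 + √(2(1−p)/(p+2))·cosh(B(u) + r·y)). -/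
lemma cosh_arcosh {x : ℝ} (hx : 1 ≤ x) : Real.cosh (arcosh x) = x := by
  have h1 : (0:ℝ) ≤ x ^ 2 - 1 := by nlinarith
  have hs : Real.sqrt (x ^ 2 - 1) ^ 2 = x ^ 2 - 1 := Real.sq_sqrt h1
  have hsn : 0 ≤ Real.sqrt (x ^ 2 - 1) := Real.sqrt_nonneg _
  have hpos : 0 < x + Real.sqrt (x ^ 2 - 1) := by nlinarith
  rw [arcosh, Real.cosh_log hpos]
  have hmul : (x + Real.sqrt (x ^ 2 - 1)) * (x - Real.sqrt (x ^ 2 - 1)) = 1 := by nlinarith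
  rw [inv_eq_of_mul_eq_one_right hmul]; ring

lemma arcosh_nonneg {x : ℝ} (hx : 1 ≤ x) : 0 ≤ arcosh x := by
  have hsn : 0 ≤ Real.sqrt (x ^ 2 - 1) := Real.sqrt_nonneg _
  exact Real.log_nonneg (by nlinarith)

lemma sinh_arcosh {x : ℝ} (hx : 1 ≤ x) : Real.sinh (arcosh x) = Real.sqrt (x ^ 2 - 1) := by
  have h1 : (0:ℝ) ≤ x ^ 2 - 1 := by nlinarith
  have hsnn : 0 ≤ Real.sinh (arcosh x) := Real.sinh_nonneg_iff.mpr (arcosh_nonneg hx)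
  have h2 : Real.sinh (arcosh x) ^ 2 = x ^ 2 - 1 := by
    have := Real.cosh_sq (arcosh x)
    rw [cosh_arcosh hx] at this; linarith
  rw [← h2, Real.sqrt_sq hsnn]

/-- Closed hyperbolic-cosine form for the iterates `T_r(u)`: with
`T_0(u) = 2/(1−u)` and `T_{r+1}(u) = g(T_r(u))`, one has for every `r ≥ 0`
`T_r(u) = ((1−p)/(3p))·(−1 + √(2(1−p)/(p+2))·cosh(B(u) + r·y))`. -/
theorem stmt_8 (p u : ℝ) (hp0 : 0 < p) (hp1 : p < 1) (hu0 : 0 ≤ u) (hu1 : u < 1)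
    (T : ℕ → ℝ) (hT0 : T 0 = 2 / (1 - u))
    (hTrec : ∀ r : ℕ, T (r + 1) =
      ((2 * p + 1) * T r + (1 - p) +
          Real.sqrt (3 * p * (p + 2) * (T r) ^ 2 + 2 * (1 - p) * (p + 2) * T r
            + (1 - p) ^ 2)) / (1 - p)) :
    ∀ r : ℕ, T r = ((1 - p) / (3 * p)) *
      (-1 + Real.sqrt (2 * (1 - p) / (p + 2)) *
        Real.cosh (arcosh (Real.sqrt ((p + 2) / (2 * (1 - p)))
            * (1 + 6 * p / ((1 - u) * (1 - p))))
          + r * arcosh ((2 * p + 1) / (1 - p)))) := by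
  have hp : (0:ℝ) < 1 - p := by linarith
  have hu : (0:ℝ) < 1 - u := by linarith
  have hp2 : (0:ℝ) < p + 2 := by linarith
  have hpne : p ≠ 0 := hp0.ne'
  have hpne' : (1:ℝ) - p ≠ 0 := hp.ne'
  have hune : (1:ℝ) - u ≠ 0 := hu.ne'
  set c := Real.sqrt (2 * (1 - p) / (p + 2)) with hcdef
  set x0 := Real.sqrt ((p + 2) / (2 * (1 - p))) * (1 + 6 * p / ((1 - u) * (1 - p)))
    with hx0def
  set y := arcosh ((2 * p + 1) / (1 - p)) with hydef
  set B := arcosh x0 with hBdef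
  have hc2 : c ^ 2 = 2 * (1 - p) / (p + 2) := Real.sq_sqrt (by positivity)
  have hcpos : 0 < c := Real.sqrt_pos.mpr (by positivity)
  have hcs : c * Real.sqrt ((p + 2) / (2 * (1 - p))) = 1 := by
    rw [hcdef, ← Real.sqrt_mul (by positivity),
      show 2 * (1 - p) / (p + 2) * ((p + 2) / (2 * (1 - p))) = 1 by field_simp]
    exact Real.sqrt_one
  have hx0ge : 1 ≤ x0 := by
    have h1 : 1 ≤ Real.sqrt ((p + 2) / (2 * (1 - p))) := by
      rw [Real.one_le_sqrt, le_div_iff₀ (by positivity)]; linarith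
    have h2 : (0:ℝ) ≤ 6 * p / ((1 - u) * (1 - p)) := by positivity
    nlinarith
  have hyc : 1 ≤ (2 * p + 1) / (1 - p) := by rw [le_div_iff₀ hp]; linarith
  have hcoshy : Real.cosh y = (2 * p + 1) / (1 - p) := cosh_arcosh hyc
  have hsinhy : Real.sinh y = Real.sqrt (3 * p * (p + 2)) / (1 - p) := by
    rw [hydef, sinh_arcosh hyc,
      show ((2 * p + 1) / (1 - p)) ^ 2 - 1 = 3 * p * (p + 2) / (1 - p) ^ 2 by
        field_simp; ring,
      Real.sqrt_div (by positivity), Real.sqrt_sq hp.le]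
  have hcoshB : Real.cosh B = x0 := cosh_arcosh hx0ge
  have hynn : 0 ≤ y := arcosh_nonneg hyc
  have hBnn : 0 ≤ B := arcosh_nonneg hx0ge
  intro r
  induction r with
  | zero =>
    simp only [Nat.cast_zero, zero_mul, add_zero]
    rw [hT0, hcoshB, hx0def, ← mul_assoc, hcs, one_mul]
    field_simp
    ring
  | succ r ih =>
    have hθnn : (0:ℝ) ≤ B + r * y :=
      add_nonneg hBnn (mul_nonneg (Nat.cast_nonneg r) hynn)
    set θ := B + (r:ℝ) * y with hθdef
    set cθ := Real.cosh θ with hcθdef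
    set sθ := Real.sinh θ with hsθdef
    have hsθnn : 0 ≤ sθ := Real.sinh_nonneg_iff.mpr hθnn
    have hsθ2 : sθ ^ 2 = cθ ^ 2 - 1 := by
      have := Real.cosh_sq θ; rw [← hcθdef, ← hsθdef] at this; linarith
    have hq2 : Real.sqrt (3 * p * (p + 2)) ^ 2 = 3 * p * (p + 2) :=
      Real.sq_sqrt (by positivity)
    have hqnn : 0 ≤ Real.sqrt (3 * p * (p + 2)) := Real.sqrt_nonneg _
    have hKnn : 0 ≤ Real.sqrt (3 * p * (p + 2)) * (1 - p) * c * sθ / (3 * p) :=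
      div_nonneg
        (mul_nonneg (mul_nonneg (mul_nonneg hqnn hp.le) hcpos.le) hsθnn)
        (by positivity)
    have key : 3 * p * (p + 2) * (T r) ^ 2 + 2 * (1 - p) * (p + 2) * T r + (1 - p) ^ 2
        = (Real.sqrt (3 * p * (p + 2)) * (1 - p) * c * sθ / (3 * p)) ^ 2 := by
      have iht : 3 * p * T r = (1 - p) * (-1 + c * cθ) := by
        rw [ih]; field_simp
      have hc2' : c ^ 2 * (p + 2) = 2 * (1 - p) := by
        rw [hc2]; field_simp
      rw [div_pow, eq_div_iff (by positivity : ((3:ℝ) * p) ^ 2 ≠ 0)]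
      linear_combination
        (3 * p * (p + 2) * (3 * p * T r + (1 - p) * (-1 + c * cθ))
          + 6 * p * (1 - p) * (p + 2)) * iht
        + 3 * p * (1 - p) ^ 2 * hc2'
        - (1 - p) ^ 2 * c ^ 2 * (cθ ^ 2 - 1) * hq2
        - Real.sqrt (3 * p * (p + 2)) ^ 2 * (1 - p) ^ 2 * c ^ 2 * hsθ2
    rw [hTrec r, key, Real.sqrt_sq hKnn, ih]
    push_cast
    rw [show B + ((r:ℝ) + 1) * y = θ + y by rw [hθdef]; ring,
      Real.cosh_add, ← hcθdef, ← hsθdef, hcoshy, hsinhy]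
    field_simp
    ring
end

section
/- Let (X_r)_{r≥1} be a family of nonnegative real random variables and δ ∈ (0, 1/2). Suppose there exist constants λ₀ > 0, A > 0, c > 0 such that for all r ≥ 1 and all 0 ≤ λ ≤ λ₀: E[e^{−λX_r}] ≥ 1 − E[λ X_r] and E[e^{−λX_r} − 1 + λX_r] ≤ A·λ^{3/2} + c·λ², and moreover sup_r E[X_r] < ∞. Then sup_r E[X_r^{3/2−δ}] < ∞. -/
open MeasureTheory Real

/-- Abstract moment-transfer lemma: if a family of nonnegative random variables has
Laplace transforms `E[e^{−λX_r}] ≥ 1 − λE[X_r]` with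
`E[e^{−λX_r} − 1 + λX_r] ≤ A·λ^{3/2} + c·λ²` for `0 ≤ λ ≤ λ₀`, uniformly in `r`,
and uniformly bounded means, then the moments `E[X_r^{3/2−δ}]` are uniformly bounded. -/
theorem stmt_10 {Ω : Type*} [MeasurableSpace Ω] (μ : Measure Ω) [IsProbabilityMeasure μ]
    (X : ℕ → Ω → ℝ) (hmeas : ∀ r, Measurable (X r)) (hpos : ∀ r ω, 0 ≤ X r ω)
    (hint : ∀ r, Integrable (X r) μ)
    (δ : ℝ) (hδ0 : 0 < δ) (hδ : δ < 1 / 2)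
    (lam0 A c : ℝ) (hlam0 : 0 < lam0) (hA : 0 < A) (hc : 0 < c)
    (h1 : ∀ r : ℕ, 1 ≤ r → ∀ lam : ℝ, 0 ≤ lam → lam ≤ lam0 →
      (∫ ω, Real.exp (-lam * X r ω) ∂μ) ≥ 1 - lam * ∫ ω, X r ω ∂μ)
    (h2 : ∀ r : ℕ, 1 ≤ r → ∀ lam : ℝ, 0 ≤ lam → lam ≤ lam0 →
      (∫ ω, (Real.exp (-lam * X r ω) - 1 + lam * X r ω) ∂μ) ≤
        A * lam ^ ((3 : ℝ) / 2) + c * lam ^ 2)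
    (hmean : ∃ M : ℝ, ∀ r : ℕ, 1 ≤ r → (∫ ω, X r ω ∂μ) ≤ M) :
    ∃ M' : ℝ, ∀ r : ℕ, 1 ≤ r → (∫ ω, (X r ω) ^ ((3 : ℝ) / 2 - δ) ∂μ) ≤ M' := by
  obtain ⟨M, hM⟩ := hmean
  have hM0 : 0 ≤ M := le_trans (integral_nonneg (hpos 1)) (hM 1 le_rfl)
  set p : ℝ := 3 / 2 - δ with hp
  have hp1 : 1 < p := by rw [hp]; linarith
  have hp0 : 0 < p := by linarith
  set t₀ : ℝ := max (2 / lam0) 1 with ht₀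
  have ht₀1 : (1 : ℝ) ≤ t₀ := le_max_right _ _
  have ht₀pos : (0 : ℝ) < t₀ := lt_of_lt_of_le one_pos ht₀1
  have ht₀lam : 2 / t₀ ≤ lam0 := by
    rw [div_le_iff₀ ht₀pos]
    calc (2 : ℝ) = lam0 * (2 / lam0) := by field_simp
    _ ≤ lam0 * t₀ := by
        apply mul_le_mul_of_nonneg_left (le_max_left _ _) hlam0.le
  set K : ℝ := 4 * A + 4 * c with hK
  have hK0 : 0 < K := by positivity
  -- Tail bound
  have tail : ∀ r : ℕ, 1 ≤ r → ∀ t : ℝ, t₀ ≤ t →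
      ∫ ω in {ω | t ≤ X r ω}, X r ω ∂μ ≤ K * t ^ (-(1 / 2) : ℝ) := by
    intro r hr t ht
    have ht1 : (1 : ℝ) ≤ t := le_trans ht₀1 ht
    have htpos : (0 : ℝ) < t := lt_of_lt_of_le one_pos ht1
    set lam : ℝ := 2 / t with hlam
    have hlam_pos : 0 < lam := by positivity
    have hlam_le : lam ≤ lam0 := by
      refine le_trans ?_ ht₀lam
      exact div_le_div_of_nonneg_left (by norm_num) ht₀pos ht
    set S : Set Ω := {ω | t ≤ X r ω} with hSdef
    have hS : MeasurableSet S := measurableSet_le measurable_const (hmeas r)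
    have hexp_int : Integrable (fun ω => Real.exp (-lam * X r ω)) μ := by
      refine Integrable.mono' (integrable_const (1 : ℝ)) ?_ ?_
      · exact (((hmeas r).const_mul (-lam)).exp).aestronglyMeasurable
      · filter_upwards with ω
        rw [Real.norm_eq_abs, abs_of_nonneg (Real.exp_nonneg _)]
        rw [← Real.exp_zero]
        apply Real.exp_le_exp.mpr
        have := mul_nonneg hlam_pos.le (hpos r ω)
        linarith
    set h : Ω → ℝ := fun ω => Real.exp (-lam * X r ω) - 1 + lam * X r ω with hh
    have hh_int : Integrable h μ :=
      (hexp_int.sub (integrable_const 1)).add ((hint r).const_mul lam)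
    have hh_nonneg : ∀ ω, 0 ≤ h ω := by
      intro ω
      have := Real.add_one_le_exp (-lam * X r ω)
      simp only [hh]
      linarith
    have key : ∀ ω ∈ S, lam / 2 * X r ω ≤ h ω := by
      intro ω hω
      have hX : t ≤ X r ω := hω
      have h2le : 2 ≤ lam * X r ω := by
        rw [hlam]
        rw [div_mul_eq_mul_div, le_div_iff₀ htpos]
        nlinarith
      have hexp : 0 ≤ Real.exp (-lam * X r ω) := Real.exp_nonneg _
      simp only [hh]
      nlinarith
    have step : lam / 2 * ∫ ω in S, X r ω ∂μ ≤ A * lam ^ ((3 : ℝ) / 2) + c * lam ^ 2 := by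
      calc lam / 2 * ∫ ω in S, X r ω ∂μ = ∫ ω in S, lam / 2 * X r ω ∂μ :=
            (integral_const_mul _ _).symm
        _ ≤ ∫ ω in S, h ω ∂μ := by
            apply setIntegral_mono_on (((hint r).const_mul _).integrableOn)
              (hh_int.integrableOn) hS key
        _ ≤ ∫ ω, h ω ∂μ := setIntegral_le_integral hh_int (ae_of_all _ hh_nonneg)
        _ ≤ A * lam ^ ((3 : ℝ) / 2) + c * lam ^ 2 := h2 r hr lam hlam_pos.le hlam_le
    have step2 : ∫ ω in S, X r ω ∂μ ≤ 2 * A * lam ^ ((1 : ℝ) / 2) + 2 * c * lam := by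
      have h32 : lam ^ ((3 : ℝ) / 2) = lam ^ ((1 : ℝ) / 2) * lam := by
        rw [show (3 : ℝ) / 2 = 1 / 2 + 1 by norm_num, Real.rpow_add hlam_pos,
          Real.rpow_one]
      rw [h32] at step
      have hd : ∫ ω in S, X r ω ∂μ ≤
          (A * (lam ^ ((1 : ℝ) / 2) * lam) + c * lam ^ 2) / (lam / 2) := by
        rw [le_div_iff₀ (by positivity)]
        linarith [step]
      refine hd.trans (le_of_eq ?_)
      field_simp
    refine le_trans step2 ?_
    -- 2A lam^{1/2} + 2c lam ≤ K t^{-1/2}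
    have hhalf : lam ^ ((1 : ℝ) / 2) ≤ 2 * t ^ (-(1 / 2) : ℝ) := by
      rw [hlam, Real.div_rpow (by norm_num) htpos.le, Real.rpow_neg htpos.le,
        div_eq_mul_inv]
      apply mul_le_mul_of_nonneg_right _ (by positivity)
      calc (2 : ℝ) ^ ((1 : ℝ) / 2) ≤ 2 ^ (1 : ℝ) :=
            Real.rpow_le_rpow_of_exponent_le one_le_two (by norm_num)
        _ = 2 := Real.rpow_one 2
    have hlam_le2 : lam ≤ 2 * t ^ (-(1 / 2) : ℝ) := by
      rw [hlam]
      have h' : t ^ (-(1 : ℝ)) ≤ t ^ (-(1 / 2) : ℝ) :=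
        Real.rpow_le_rpow_of_exponent_le ht1 (by norm_num)
      rw [Real.rpow_neg_one] at h'
      rw [div_eq_mul_inv]
      linarith
    have h1' : 2 * A * lam ^ ((1 : ℝ) / 2) ≤ 4 * A * t ^ (-(1 / 2) : ℝ) := by
      have := mul_le_mul_of_nonneg_left hhalf (by positivity : (0:ℝ) ≤ 2 * A)
      linarith
    have h2' : 2 * c * lam ≤ 4 * c * t ^ (-(1 / 2) : ℝ) := by
      have := mul_le_mul_of_nonneg_left hlam_le2 (by positivity : (0:ℝ) ≤ 2 * c)
      linarith
    rw [hK, add_mul]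
    linarith
  -- geometric ratio
  set ρ : ℝ := (2 : ℝ) ^ (-δ) with hρ
  have hρ0 : 0 < ρ := Real.rpow_pos_of_pos two_pos _
  have hρ1 : ρ < 1 := Real.rpow_lt_one_of_one_lt_of_neg one_lt_two (by linarith)
  set B : ℝ := t₀ ^ (p - 1) * M + 2 * K * (1 - ρ)⁻¹ with hB
  have hB0 : 0 ≤ B := by
    have hinv : (0:ℝ) < (1 - ρ)⁻¹ := inv_pos.mpr (by linarith)
    have ht : (0:ℝ) < t₀ ^ (p - 1) := Real.rpow_pos_of_pos ht₀pos _
    have h2' := mul_pos (mul_pos two_pos hK0) hinv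
    have h3' := mul_nonneg ht.le hM0
    rw [hB]
    linarith
  refine ⟨B, ?_⟩
  intro r hr
  set tk : ℕ → ℝ := fun k => 2 ^ k * t₀ with htk
  have htk_ge : ∀ k, t₀ ≤ tk k := by
    intro k
    rw [htk]
    calc t₀ = 1 * t₀ := (one_mul _).symm
      _ ≤ 2 ^ k * t₀ := by
          apply mul_le_mul_of_nonneg_right (one_le_pow₀ one_le_two) ht₀pos.le
  have htk_pos : ∀ k, 0 < tk k := fun k => lt_of_lt_of_le ht₀pos (htk_ge k)
  set g : ℕ → Ω → ℝ := fun k ω =>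
    (2 * tk k) ^ (p - 1) * Set.indicator {ω | tk k ≤ X r ω} (X r) ω with hg
  have hSk : ∀ k, MeasurableSet {ω | tk k ≤ X r ω} :=
    fun k => measurableSet_le measurable_const (hmeas r)
  have hg_nonneg : ∀ k ω, 0 ≤ g k ω := by
    intro k ω
    apply mul_nonneg (Real.rpow_nonneg (by linarith [htk_pos k]) _)
    exact Set.indicator_nonneg (fun ω _ => hpos r ω) ω
  have hg_meas : ∀ k, Measurable (g k) :=
    fun k => (((hmeas r).indicator (hSk k)).const_mul _)
  have hg_int : ∀ k, Integrable (g k) μ :=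
    fun k => (((hint r).indicator (hSk k)).const_mul _)
  -- pointwise bound
  have pointwise : ∀ ω, ENNReal.ofReal ((X r ω) ^ p) ≤
      ENNReal.ofReal (t₀ ^ (p - 1) * X r ω) + ∑' k, ENNReal.ofReal (g k ω) := by
    intro ω
    set x : ℝ := X r ω with hx
    have hx0 : 0 ≤ x := hpos r ω
    by_cases hcase : x < t₀
    · have hle : x ^ p ≤ t₀ ^ (p - 1) * x := by
        rcases eq_or_lt_of_le hx0 with h0 | h0
        · rw [← h0, Real.zero_rpow (by positivity), mul_zero]
        · have hxp : x ^ p = x ^ (p - 1) * x := by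
            rw [← Real.rpow_add_one h0.ne' (p - 1), sub_add_cancel]
          rw [hxp]
          apply mul_le_mul_of_nonneg_right _ hx0
          exact Real.rpow_le_rpow hx0 hcase.le (by linarith)
      exact le_trans (ENNReal.ofReal_le_ofReal hle) le_self_add
    · push_neg at hcase
      -- find dyadic level
      have hx1 : (1 : ℝ) ≤ x / t₀ := (one_le_div ht₀pos).mpr hcase
      set n : ℕ := ⌊x / t₀⌋₊ with hn
      have hn1 : 1 ≤ n := Nat.le_floor (by exact_mod_cast hx1)
      set k : ℕ := Nat.log 2 n with hk
      have hlow : ((2 : ℕ) ^ k : ℝ) ≤ x / t₀ := by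
        calc ((2 : ℕ) ^ k : ℝ) ≤ (n : ℝ) := by
              exact_mod_cast Nat.pow_log_le_self 2 (by omega)
          _ ≤ x / t₀ := Nat.floor_le (by linarith)
      have hhigh : x / t₀ < ((2 : ℕ) ^ (k + 1) : ℝ) := by
        calc x / t₀ < (n : ℝ) + 1 := Nat.lt_floor_add_one _
          _ ≤ ((2 : ℕ) ^ (k + 1) : ℝ) := by
              exact_mod_cast Nat.lt_pow_succ_log_self (by norm_num) n
      have htkx : tk k ≤ x := by
        rw [htk]
        rw [← le_div_iff₀ ht₀pos]
        exact_mod_cast hlow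
      have hxtk : x < 2 * tk k := by
        rw [htk, ← mul_assoc]
        have : x < (2 : ℝ) ^ (k + 1) * t₀ := by
          rw [← div_lt_iff₀ ht₀pos]
          exact_mod_cast hhigh
        calc x < (2 : ℝ) ^ (k + 1) * t₀ := this
          _ = 2 * 2 ^ k * t₀ := by ring
      have hxpos : 0 < x := lt_of_lt_of_le ht₀pos hcase
      have hle : x ^ p ≤ g k ω := by
        rw [hg]
        simp only
        rw [Set.indicator_of_mem (by exact htkx : ω ∈ {ω | tk k ≤ X r ω})]
        have hxp : x ^ p = x ^ (p - 1) * x := by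
          rw [← Real.rpow_add_one hxpos.ne' (p - 1), sub_add_cancel]
        rw [hxp]
        apply mul_le_mul_of_nonneg_right _ hx0
        exact Real.rpow_le_rpow hx0 hxtk.le (by linarith)
      calc ENNReal.ofReal (x ^ p) ≤ ENNReal.ofReal (g k ω) := ENNReal.ofReal_le_ofReal hle
        _ ≤ ∑' j, ENNReal.ofReal (g j ω) := ENNReal.le_tsum k
        _ ≤ _ := le_add_self
  -- per-k integral bound
  have per_k : ∀ k, (∫⁻ ω, ENNReal.ofReal (g k ω) ∂μ) ≤ ENNReal.ofReal (2 * K * ρ ^ k) := by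
    intro k
    rw [← ofReal_integral_eq_lintegral_ofReal (hg_int k) (ae_of_all _ (hg_nonneg k))]
    apply ENNReal.ofReal_le_ofReal
    have hint_g : ∫ ω, g k ω ∂μ =
        (2 * tk k) ^ (p - 1) * ∫ ω in {ω | tk k ≤ X r ω}, X r ω ∂μ := by
      rw [hg]
      simp only
      rw [integral_const_mul, integral_indicator (hSk k)]
    rw [hint_g]
    have htail := tail r hr (tk k) (htk_ge k)
    have hcoef : (0 : ℝ) ≤ (2 * tk k) ^ (p - 1) := Real.rpow_nonneg (by linarith [htk_pos k]) _
    calc (2 * tk k) ^ (p - 1) * ∫ ω in {ω | tk k ≤ X r ω}, X r ω ∂μ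
        ≤ (2 * tk k) ^ (p - 1) * (K * (tk k) ^ (-(1 / 2) : ℝ)) := by
          apply mul_le_mul_of_nonneg_left htail hcoef
      _ = K * (2 ^ (p - 1) * ((tk k) ^ (p - 1) * (tk k) ^ (-(1 / 2) : ℝ))) := by
          rw [Real.mul_rpow (by norm_num) (htk_pos k).le]; ring
      _ = K * (2 ^ (p - 1) * (tk k) ^ (-δ)) := by
          rw [← Real.rpow_add (htk_pos k),
            show p - 1 + -(1 / 2 : ℝ) = -δ by rw [hp]; ring]
      _ ≤ K * (2 * (tk k) ^ (-δ)) := by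
          apply mul_le_mul_of_nonneg_left _ hK0.le
          apply mul_le_mul_of_nonneg_right _ (Real.rpow_nonneg (htk_pos k).le _)
          calc (2 : ℝ) ^ (p - 1) ≤ 2 ^ (1 : ℝ) :=
                Real.rpow_le_rpow_of_exponent_le one_le_two (by rw [hp]; linarith)
            _ = 2 := Real.rpow_one 2
      _ ≤ 2 * K * ρ ^ k := by
          have : (tk k) ^ (-δ) ≤ ρ ^ k := by
            rw [htk]
            rw [Real.mul_rpow (by positivity) ht₀pos.le]
            have h1 : ((2 : ℝ) ^ k) ^ (-δ) = ρ ^ k := by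
              rw [← Real.rpow_natCast (2 : ℝ) k, ← Real.rpow_mul (by norm_num),
                mul_comm, Real.rpow_mul (by norm_num), hρ, Real.rpow_natCast]
            have h2 : t₀ ^ (-δ) ≤ 1 :=
              Real.rpow_le_one_of_one_le_of_nonpos ht₀1 (by linarith)
            calc ((2 : ℝ) ^ k) ^ (-δ) * t₀ ^ (-δ) ≤ ((2 : ℝ) ^ k) ^ (-δ) * 1 := by
                  apply mul_le_mul_of_nonneg_left h2 (Real.rpow_nonneg (by positivity) _)
              _ = ρ ^ k := by rw [mul_one, h1]
          have h' := mul_le_mul_of_nonneg_left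
            (mul_le_mul_of_nonneg_left this (by norm_num : (0:ℝ) ≤ 2)) hK0.le
          linarith
  -- assemble
  have hXp_meas : Measurable fun ω => (X r ω) ^ p := by fun_prop
  have hnn : 0 ≤ᵐ[μ] fun ω => (X r ω) ^ p :=
    ae_of_all _ fun ω => Real.rpow_nonneg (hpos r ω) _
  rw [integral_eq_lintegral_of_nonneg_ae hnn hXp_meas.aestronglyMeasurable]
  apply ENNReal.toReal_le_of_le_ofReal hB0
  have hfirst_int : Integrable (fun ω => t₀ ^ (p - 1) * X r ω) μ := (hint r).const_mul _
  have hfirst_nonneg : ∀ ω, 0 ≤ t₀ ^ (p - 1) * X r ω :=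
    fun ω => mul_nonneg (Real.rpow_nonneg ht₀pos.le _) (hpos r ω)
  calc ∫⁻ ω, ENNReal.ofReal ((X r ω) ^ p) ∂μ
      ≤ ∫⁻ ω, (ENNReal.ofReal (t₀ ^ (p - 1) * X r ω) + ∑' k, ENNReal.ofReal (g k ω)) ∂μ :=
        lintegral_mono pointwise
    _ = (∫⁻ ω, ENNReal.ofReal (t₀ ^ (p - 1) * X r ω) ∂μ)
        + ∫⁻ ω, (∑' k, ENNReal.ofReal (g k ω)) ∂μ :=
        lintegral_add_left (((hmeas r).const_mul _).ennreal_ofReal) _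
    _ = (∫⁻ ω, ENNReal.ofReal (t₀ ^ (p - 1) * X r ω) ∂μ)
        + ∑' k, ∫⁻ ω, ENNReal.ofReal (g k ω) ∂μ := by
        rw [lintegral_tsum (fun k => ((hg_meas k).ennreal_ofReal).aemeasurable)]
    _ ≤ ENNReal.ofReal (t₀ ^ (p - 1) * M) + ENNReal.ofReal (2 * K * (1 - ρ)⁻¹) := by
        apply add_le_add
        · rw [← ofReal_integral_eq_lintegral_ofReal hfirst_int (ae_of_all _ hfirst_nonneg)]
          apply ENNReal.ofReal_le_ofReal
          rw [integral_const_mul]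
          exact mul_le_mul_of_nonneg_left (hM r hr) (Real.rpow_nonneg ht₀pos.le _)
        · calc (∑' k, ∫⁻ ω, ENNReal.ofReal (g k ω) ∂μ)
              ≤ ∑' k, ENNReal.ofReal (2 * K * ρ ^ k) := ENNReal.tsum_le_tsum per_k
            _ = ENNReal.ofReal (∑' k, 2 * K * ρ ^ k) := by
                rw [ENNReal.ofReal_tsum_of_nonneg
                  (fun k => by positivity)
                  ((summable_geometric_of_lt_one hρ0.le hρ1).mul_left (2 * K))]
            _ = ENNReal.ofReal (2 * K * (1 - ρ)⁻¹) := by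
                rw [tsum_mul_left, tsum_geometric_of_lt_one hρ0.le hρ1]
    _ = ENNReal.ofReal B := by
        rw [← ENNReal.ofReal_add
          (mul_nonneg (Real.rpow_nonneg ht₀pos.le _) hM0)
          (mul_nonneg (by positivity)
            (inv_pos.mpr (by linarith : (0:ℝ) < 1 - ρ)).le), hB]
end
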